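/- arXiv:1812.07694 — 5 statements merged into one kernel-verified Lean document; each statement's English description precedes it below -/
import Mathlib

section
/- The squared 2-Wasserstein distance between two probability measures on ℝ with distribution functions F and G equals the integral over [0,1] of (F^{-1}(t) - G^{-1}(t))^2 dt, where F^{-1} and G^{-1} are the quantile functions. -/
/-!
Evaluating both quantile functions at one uniform variable on `(0, 1)` gives a coupling of `μ`
and `ν` whose joint distribution function is `min (F s) (G t)`, the Fréchet–Hoeffding upper bound
for every coupling. The marginals fix `E[X²]` and `E[Y²]`, so minimising `E[(X - Y)²]` amounts to
maximising `E[XY]`. Writing `x = ∫ (1_{0 ≤ s} - 1_{x ≤ s}) ds` and applying Fubini (Hoeffding's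
identity) expresses `E[XY]` as `∫∫ P(X ≤ s, Y ≤ t) ds dt` plus terms that depend only on the
marginals, so `E[XY]` is monotone in the joint distribution function.
-/

open MeasureTheory Set

/-- The quantile function of a distribution function `F`: `F⁻¹(t) = inf {x : F x ≥ t}`. -/
noncomputable def quantile (F : ℝ → ℝ) (t : ℝ) : ℝ := sInf {x : ℝ | t ≤ F x}

open ProbabilityTheory Filter Topology

theorem StieltjesFunction.quantile_le_iff (F : StieltjesFunction ℝ) {t : ℝ}
    (hne : {x | t ≤ F x}.Nonempty) (hbdd : BddBelow {x | t ≤ F x}) {x : ℝ} :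
    quantile F t ≤ x ↔ t ≤ F x := by
  refine ⟨fun h => ?_, fun h => csInf_le hbdd h⟩
  have right_of_x : ∀ᶠ y in 𝓝[>] x, t ≤ F y := by
    filter_upwards [self_mem_nhdsWithin] with y hy
    obtain ⟨z, hz, hzy⟩ := exists_lt_of_csInf_lt hne (h.trans_lt hy)
    exact hz.trans (F.mono hzy.le)
  exact ge_of_tendsto ((F.right_continuous x).mono Ioi_subset_Ici_self) right_of_x

section Quantile

variable (μ : Measure ℝ)

theorem quantile_cdf_le_iff {t : ℝ} (ht : t ∈ Ioo 0 1) (x : ℝ) :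
    quantile (cdf μ) t ≤ x ↔ t ≤ cdf μ x := by
  refine (cdf μ).quantile_le_iff ?_ ?_
  · exact ((tendsto_cdf_atTop μ).eventually (eventually_ge_nhds ht.2)).exists
  · obtain ⟨y, hy⟩ := ((tendsto_cdf_atBot μ).eventually (eventually_lt_nhds ht.1)).exists
    exact ⟨y, fun z hz => le_of_not_gt fun hzy => (hz.trans (monotone_cdf μ hzy.le)).not_gt hy⟩

theorem monotoneOn_quantile_cdf : MonotoneOn (quantile (cdf μ)) (Ioo 0 1) := fun _ hs _ ht hst =>
  (quantile_cdf_le_iff μ hs _).2 (hst.trans ((quantile_cdf_le_iff μ ht _).1 le_rfl))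

theorem aemeasurable_quantile_cdf :
    AEMeasurable (quantile (cdf μ)) (volume.restrict (Ioo 0 1)) :=
  aemeasurable_restrict_of_monotoneOn measurableSet_Ioo (monotoneOn_quantile_cdf μ)

theorem preimage_quantile_cdf_Iic_inter_Ioo (x : ℝ) :
    quantile (cdf μ) ⁻¹' Iic x ∩ Ioo 0 1 = Iic (cdf μ x) ∩ Ioo 0 1 := by
  ext t
  simp only [mem_inter_iff, mem_preimage, mem_Iic]
  exact and_congr_left (quantile_cdf_le_iff μ · x)

end Quantile

theorem volume_Iic_inter_Ioo {c : ℝ} (hc₁ : c ≤ 1) :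
    volume (Iic c ∩ Ioo 0 1) = ENNReal.ofReal c := by
  rw [measure_congr ((ae_eq_refl (Iic c)).inter Ioo_ae_eq_Ioc), inter_comm, Ioc_inter_Iic,
    min_eq_right hc₁, Real.volume_Ioc, sub_zero]

instance : IsProbabilityMeasure (volume.restrict (Ioo (0 : ℝ) 1)) :=
  ⟨by simp⟩

theorem map_quantile_cdf (μ : Measure ℝ) [IsProbabilityMeasure μ] :
    (volume.restrict (Ioo 0 1)).map (quantile (cdf μ)) = μ := by
  refine Measure.ext_of_Iic _ _ fun x => ?_
  rw [Measure.map_apply_of_aemeasurable (aemeasurable_quantile_cdf μ) measurableSet_Iic,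
    Measure.restrict_apply' measurableSet_Ioo, preimage_quantile_cdf_Iic_inter_Ioo,
    volume_Iic_inter_Ioo (cdf_le_one μ x), ofReal_cdf]

noncomputable def quantileCoupling (μ ν : Measure ℝ) : Measure (ℝ × ℝ) :=
  (volume.restrict (Ioo 0 1)).map fun t => (quantile (cdf μ) t, quantile (cdf ν) t)

section QuantileCoupling

variable (μ ν : Measure ℝ)

theorem aemeasurable_quantile_cdf_prod :
    AEMeasurable (fun t => (quantile (cdf μ) t, quantile (cdf ν) t)) (volume.restrict (Ioo 0 1)) :=
  (aemeasurable_quantile_cdf μ).prodMk (aemeasurable_quantile_cdf ν)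

instance : IsProbabilityMeasure (quantileCoupling μ ν) :=
  Measure.isProbabilityMeasure_map (aemeasurable_quantile_cdf_prod μ ν)

theorem quantileCoupling_map_fst [IsProbabilityMeasure μ] :
    (quantileCoupling μ ν).map Prod.fst = μ := by
  rw [quantileCoupling, AEMeasurable.map_map_of_aemeasurable measurable_fst.aemeasurable
    (aemeasurable_quantile_cdf_prod μ ν)]
  exact map_quantile_cdf μ

theorem quantileCoupling_map_snd [IsProbabilityMeasure ν] :
    (quantileCoupling μ ν).map Prod.snd = ν := by
  rw [quantileCoupling, AEMeasurable.map_map_of_aemeasurable measurable_snd.aemeasurable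
    (aemeasurable_quantile_cdf_prod μ ν)]
  exact map_quantile_cdf ν

theorem quantileCoupling_Iic_prod_Iic [IsProbabilityMeasure μ] [IsProbabilityMeasure ν] (s t : ℝ) :
    quantileCoupling μ ν (Iic s ×ˢ Iic t) = min (μ (Iic s)) (ν (Iic t)) := by
  have hpre : (fun u => (quantile (cdf μ) u, quantile (cdf ν) u)) ⁻¹' (Iic s ×ˢ Iic t) ∩ Ioo 0 1
      = Iic (min (cdf μ s) (cdf ν t)) ∩ Ioo 0 1 := by
    rw [mk_preimage_prod, ← Iic_inter_Iic, inter_inter_distrib_right,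
      preimage_quantile_cdf_Iic_inter_Ioo, preimage_quantile_cdf_Iic_inter_Ioo,
      ← inter_inter_distrib_right]
  rw [quantileCoupling, Measure.map_apply_of_aemeasurable (aemeasurable_quantile_cdf_prod μ ν)
      (measurableSet_Iic.prod measurableSet_Iic), Measure.restrict_apply' measurableSet_Ioo, hpre,
    volume_Iic_inter_Ioo ((min_le_left _ _).trans (cdf_le_one μ s)), ENNReal.ofReal_min,
    ofReal_cdf, ofReal_cdf]

end QuantileCoupling

noncomputable def signedStep (x s : ℝ) : ℝ := (Ico 0 x).indicator 1 s - (Ico x 0).indicator 1 s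

theorem signedStep_eq (x s : ℝ) :
    signedStep x s = (Ici 0).indicator 1 s - (Iic s).indicator 1 x := by
  by_cases h0 : 0 ≤ s <;> by_cases hx : x ≤ s <;> simp [signedStep, indicator_apply, h0, hx]

theorem abs_signedStep (x s : ℝ) :
    |signedStep x s| = (Ico 0 x).indicator 1 s + (Ico x 0).indicator 1 s := by
  by_cases h0 : 0 ≤ s <;> by_cases hx : x ≤ s <;> simp [signedStep, indicator_apply, h0, hx] <;>
    grind

theorem integrable_indicator_one_Ico (a b : ℝ) : Integrable ((Ico a b).indicator (1 : ℝ → ℝ)) :=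
  (integrable_indicator_iff measurableSet_Ico).2 (integrableOn_const measure_Ico_lt_top.ne)

theorem measurable_signedStep : Measurable (Function.uncurry signedStep) := by
  simp only [Function.uncurry_def, signedStep_eq]
  exact ((measurable_const.indicator measurableSet_Ici).comp measurable_snd).sub
    (measurable_const.indicator (measurableSet_le measurable_fst measurable_snd))

theorem integrable_signedStep (x : ℝ) : Integrable (signedStep x) :=
  (integrable_indicator_one_Ico 0 x).sub (integrable_indicator_one_Ico x 0)

theorem integral_signedStep (x : ℝ) : ∫ s, signedStep x s = x := by
  simp only [signedStep]
  rw [integral_sub (integrable_indicator_one_Ico 0 x)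
      (integrable_indicator_one_Ico x 0), integral_indicator_one measurableSet_Ico,
    integral_indicator_one measurableSet_Ico, Real.volume_real_Ico, Real.volume_real_Ico, sub_zero,
    zero_sub, max_zero_sub_max_neg_zero_eq_self]

theorem integral_abs_signedStep (x : ℝ) : ∫ s, |signedStep x s| = |x| := by
  simp_rw [abs_signedStep]
  rw [integral_add (integrable_indicator_one_Ico 0 x)
      (integrable_indicator_one_Ico x 0), integral_indicator_one measurableSet_Ico,
    integral_indicator_one measurableSet_Ico, Real.volume_real_Ico, Real.volume_real_Ico, sub_zero,
    zero_sub, max_zero_add_max_neg_zero_eq_abs_self]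

theorem integrable_signedStep_mul_signedStep (π : Measure (ℝ × ℝ)) [SFinite π]
    (hπ : Integrable (fun p => p.1 * p.2) π) :
    Integrable (fun q : (ℝ × ℝ) × (ℝ × ℝ) => signedStep q.1.1 q.2.1 * signedStep q.1.2 q.2.2)
      (π.prod (volume.prod volume)) := by
  refine (integrable_prod_iff ?_).2 ⟨ae_of_all _ fun p => ?_, ?_⟩
  · exact Measurable.aestronglyMeasurable <|
      (measurable_signedStep.comp (measurable_fst.fst.prodMk measurable_snd.fst)).mul
        (measurable_signedStep.comp (measurable_fst.snd.prodMk measurable_snd.snd))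
  · exact (integrable_signedStep p.1).mul_prod (integrable_signedStep p.2)
  · refine hπ.norm.congr (ae_of_all _ fun p => ?_)
    simp only [norm_mul, Real.norm_eq_abs]
    rw [integral_prod_mul (fun s => |signedStep p.1 s|) (fun t => |signedStep p.2 t|),
      integral_abs_signedStep, integral_abs_signedStep]

theorem integral_mul_eq_integral_integral_signedStep (π : Measure (ℝ × ℝ)) [SFinite π]
    (hπ : Integrable (fun p => p.1 * p.2) π) :
    ∫ p, p.1 * p.2 ∂π =
      ∫ st : ℝ × ℝ, ∫ p, signedStep p.1 st.1 * signedStep p.2 st.2 ∂π ∂(volume.prod volume) := by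
  have hlayer : ∀ p : ℝ × ℝ, p.1 * p.2 = ∫ st : ℝ × ℝ, signedStep p.1 st.1 * signedStep p.2 st.2
      ∂(volume.prod volume) := fun p => by
    rw [integral_prod_mul (signedStep p.1) (signedStep p.2), integral_signedStep,
      integral_signedStep]
  simp_rw [hlayer]
  exact integral_integral_swap (integrable_signedStep_mul_signedStep π hπ)

theorem integral_sub_indicator_mul_sub_indicator {X Y : Type*} [MeasurableSpace X]
    [MeasurableSpace Y] (π : Measure (X × Y)) [IsProbabilityMeasure π] {A : Set X} {B : Set Y}
    (hA : MeasurableSet A) (hB : MeasurableSet B) (a b : ℝ) :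
    ∫ p, (a - A.indicator 1 p.1) * (b - B.indicator 1 p.2) ∂π =
      a * b - b * (π.map Prod.fst).real A - a * (π.map Prod.snd).real B + π.real (A ×ˢ B) := by
  have hA' : MeasurableSet (Prod.fst ⁻¹' A : Set (X × Y)) := measurable_fst hA
  have hB' : MeasurableSet (Prod.snd ⁻¹' B : Set (X × Y)) := measurable_snd hB
  have hexpand : ∀ p : X × Y, (a - A.indicator 1 p.1) * (b - B.indicator 1 p.2) =
      a * b - b * (Prod.fst ⁻¹' A).indicator 1 p - a * (Prod.snd ⁻¹' B).indicator 1 p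
        + (A ×ˢ B).indicator 1 p := fun p => by
    by_cases hx : p.1 ∈ A <;> by_cases hy : p.2 ∈ B <;> simp [hx, hy] <;> ring
  have hind : ∀ {s : Set (X × Y)}, MeasurableSet s → Integrable (s.indicator 1) π :=
    fun hs => (integrable_const (1 : ℝ)).indicator hs
  have hfst : Integrable (fun p => b * (Prod.fst ⁻¹' A).indicator 1 p) π := (hind hA').const_mul _
  have hsnd : Integrable (fun p => a * (Prod.snd ⁻¹' B).indicator 1 p) π := (hind hB').const_mul _
  have hconst_sub : Integrable (fun p => a * b - b * (Prod.fst ⁻¹' A).indicator 1 p) π :=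
    (integrable_const _).sub hfst
  have hthree : Integrable (fun p => a * b - b * (Prod.fst ⁻¹' A).indicator 1 p
      - a * (Prod.snd ⁻¹' B).indicator 1 p) π := hconst_sub.sub hsnd
  simp_rw [hexpand]
  rw [integral_add hthree (hind (hA.prod hB)), integral_sub hconst_sub hsnd,
    integral_sub (integrable_const _) hfst]
  simp [integral_const_mul, integral_indicator_one hA', integral_indicator_one hB',
    integral_indicator_one (hA.prod hB), map_measureReal_apply measurable_fst hA,
    map_measureReal_apply measurable_snd hB]

theorem integral_mul_le_of_measure_Iic_prod_le {π π' : Measure (ℝ × ℝ)} [IsProbabilityMeasure π]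
    [IsProbabilityMeasure π'] (hfst : π.map Prod.fst = π'.map Prod.fst)
    (hsnd : π.map Prod.snd = π'.map Prod.snd) (hπ : Integrable (fun p => p.1 * p.2) π)
    (hπ' : Integrable (fun p => p.1 * p.2) π')
    (hle : ∀ s t, π (Iic s ×ˢ Iic t) ≤ π' (Iic s ×ˢ Iic t)) :
    ∫ p, p.1 * p.2 ∂π ≤ ∫ p, p.1 * p.2 ∂π' := by
  rw [integral_mul_eq_integral_integral_signedStep π hπ,
    integral_mul_eq_integral_integral_signedStep π' hπ']
  refine integral_mono (integrable_signedStep_mul_signedStep π hπ).integral_prod_right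
    (integrable_signedStep_mul_signedStep π' hπ').integral_prod_right fun st => ?_
  simp only [signedStep_eq]
  rw [integral_sub_indicator_mul_sub_indicator π measurableSet_Iic measurableSet_Iic,
    integral_sub_indicator_mul_sub_indicator π' measurableSet_Iic measurableSet_Iic, hfst, hsnd]
  gcongr
  exact ENNReal.toReal_mono (measure_ne_top _ _) (hle _ _)

theorem measure_prod_le_min {X Y : Type*} [MeasurableSpace X] [MeasurableSpace Y]
    (π : Measure (X × Y)) {A : Set X} {B : Set Y} (hA : MeasurableSet A) (hB : MeasurableSet B) :
    π (A ×ˢ B) ≤ min (π.map Prod.fst A) (π.map Prod.snd B) := by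
  rw [Measure.map_apply measurable_fst hA, Measure.map_apply measurable_snd hB]
  exact le_min (measure_mono fun _ hp => hp.1) (measure_mono fun _ hp => hp.2)

section Coupling

variable {μ ν : Measure ℝ} {π : Measure (ℝ × ℝ)}

theorem integrable_fst_mul_snd_of_map (hfst : π.map Prod.fst = μ) (hsnd : π.map Prod.snd = ν)
    (hμ : MemLp id 2 μ) (hν : MemLp id 2 ν) : Integrable (fun p => p.1 * p.2) π :=
  ((hfst ▸ hμ).comp_of_map measurable_fst.aemeasurable).integrable_mul
    ((hsnd ▸ hν).comp_of_map measurable_snd.aemeasurable)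

theorem integral_sub_sq_of_map (hfst : π.map Prod.fst = μ) (hsnd : π.map Prod.snd = ν)
    (hμ : MemLp id 2 μ) (hν : MemLp id 2 ν) :
    ∫ p, (p.1 - p.2) ^ 2 ∂π = ∫ x, x ^ 2 ∂μ + ∫ x, x ^ 2 ∂ν - 2 * ∫ p, p.1 * p.2 ∂π := by
  have hfst2 : Integrable (fun p => p.1 ^ 2) π :=
    ((hfst ▸ hμ).comp_of_map measurable_fst.aemeasurable).integrable_sq
  have hsnd2 : Integrable (fun p => p.2 ^ 2) π :=
    ((hsnd ▸ hν).comp_of_map measurable_snd.aemeasurable).integrable_sq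
  have hsq : Integrable (fun p => p.1 ^ 2 + p.2 ^ 2) π := hfst2.add hsnd2
  have hmul := (integrable_fst_mul_snd_of_map hfst hsnd hμ hν).const_mul 2
  simp_rw [sub_sq', mul_assoc]
  rw [integral_sub hsq hmul, integral_add hfst2 hsnd2, integral_const_mul, ← hfst,
    ← hsnd, integral_map measurable_fst.aemeasurable (by fun_prop),
    integral_map measurable_snd.aemeasurable (by fun_prop)]

theorem integral_sub_sq_quantileCoupling_le [IsProbabilityMeasure μ] [IsProbabilityMeasure ν]
    [IsProbabilityMeasure π] (hfst : π.map Prod.fst = μ) (hsnd : π.map Prod.snd = ν)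
    (hμ : MemLp id 2 μ) (hν : MemLp id 2 ν) :
    ∫ p, (p.1 - p.2) ^ 2 ∂quantileCoupling μ ν ≤ ∫ p, (p.1 - p.2) ^ 2 ∂π := by
  have hqfst := quantileCoupling_map_fst μ ν
  have hqsnd := quantileCoupling_map_snd μ ν
  have hfrechet : ∀ s t, π (Iic s ×ˢ Iic t) ≤ quantileCoupling μ ν (Iic s ×ˢ Iic t) := by
    intro s t
    rw [quantileCoupling_Iic_prod_Iic, ← hfst, ← hsnd]
    exact measure_prod_le_min π measurableSet_Iic measurableSet_Iic
  have hmul := integral_mul_le_of_measure_Iic_prod_le (hfst.trans hqfst.symm)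
    (hsnd.trans hqsnd.symm) (integrable_fst_mul_snd_of_map hfst hsnd hμ hν)
    (integrable_fst_mul_snd_of_map hqfst hqsnd hμ hν) hfrechet
  rw [integral_sub_sq_of_map hfst hsnd hμ hν, integral_sub_sq_of_map hqfst hqsnd hμ hν]
  linarith

end Coupling

/-- The squared 2-Wasserstein distance between two probability measures on ℝ with finite
second moments — defined as the infimum of `E[(X-Y)²]` over all couplings — equals
`∫_0^1 (F⁻¹(t) - G⁻¹(t))² dt`, where `F⁻¹, G⁻¹` are the quantile functions. -/
theorem wasserstein_sq_eq_quantile_integral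
    (μ ν : Measure ℝ) [IsProbabilityMeasure μ] [IsProbabilityMeasure ν]
    (h2μ : Integrable (fun x => x ^ 2) μ) (h2ν : Integrable (fun x => x ^ 2) ν) :
    sInf {c : ℝ | ∃ π : Measure (ℝ × ℝ), IsProbabilityMeasure π ∧
        π.map Prod.fst = μ ∧ π.map Prod.snd = ν ∧ c = ∫ p, (p.1 - p.2) ^ 2 ∂π}
      = ∫ t in Ioo (0 : ℝ) 1,
          (quantile (fun x => (μ (Iic x)).toReal) t
            - quantile (fun x => (ν (Iic x)).toReal) t) ^ 2 := by
  have hF : (fun x => (μ (Iic x)).toReal) = cdf μ := funext fun x => (cdf_eq_real μ x).symm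
  have hG : (fun x => (ν (Iic x)).toReal) = cdf ν := funext fun x => (cdf_eq_real ν x).symm
  have hμ : MemLp id 2 μ := (memLp_two_iff_integrable_sq aestronglyMeasurable_id).2 h2μ
  have hν : MemLp id 2 ν := (memLp_two_iff_integrable_sq aestronglyMeasurable_id).2 h2ν
  have hcost : ∫ p, (p.1 - p.2) ^ 2 ∂quantileCoupling μ ν
      = ∫ t in Ioo (0 : ℝ) 1, (quantile (cdf μ) t - quantile (cdf ν) t) ^ 2 :=
    integral_map (aemeasurable_quantile_cdf_prod μ ν) (by fun_prop)
  rw [hF, hG, ← hcost]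
  refine IsLeast.csInf_eq ⟨⟨quantileCoupling μ ν, inferInstance, quantileCoupling_map_fst μ ν,
    quantileCoupling_map_snd μ ν, rfl⟩, ?_⟩
  rintro _ ⟨π, hπ, hfst, hsnd, rfl⟩
  exact integral_sub_sq_quantileCoupling_le hfst hsnd hμ hν
end

section
/- If f has distribution function F and g has distribution function G, both with finite second moments and F continuous and strictly increasing, then the monotone transport T = G^{-1} ∘ F attains the optimal transport cost: ∫ (T(u) - u)^2 f(u) du = ∫_0^1 (F^{-1}(t) - G^{-1}(t))^2 dt. -/
open MeasureTheory Set Filter Topology ProbabilityTheory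

section Quantile

variable {F : ℝ → ℝ} {t u : ℝ}

lemma quantile_le (hF : Monotone F) {x : ℝ} (hx : F x < t) (hu : t ≤ F u) :
    quantile F t ≤ u :=
  csInf_le ⟨x, fun _ hy => le_of_not_gt fun hyx => (hx.trans_le hy).not_ge (hF hyx.le)⟩ hu

lemma le_quantile (hne : ∃ y, t ≤ F y) (h : ∀ y < u, F y < t) : u ≤ quantile F t :=
  le_csInf hne fun y hy => le_of_not_gt fun hyu => (h y hyu).not_ge hy

lemma quantile_apply_self (hF : Monotone F) (h : ∀ y < u, F y < F u) : quantile F (F u) = u :=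
  le_antisymm (quantile_le hF (h _ (sub_one_lt u)) le_rfl) (le_quantile ⟨u, le_rfl⟩ h)

/- `quantile F` is monotone on the interval of levels `t` for which `{x | t ≤ F x}` is nonempty and
bounded below, and vanishes off it. -/
lemma measurable_quantile (F : ℝ → ℝ) : Measurable (quantile F) := by
  set I := {t : ℝ | {x | t ≤ F x}.Nonempty ∧ BddBelow {x | t ≤ F x}}
  have hI : I.OrdConnected := ordConnected_def.2 fun a ha b hb c hc =>
    ⟨hb.1.mono fun x hx => hc.2.trans hx, ha.2.mono fun x hx => hc.1.trans hx⟩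
  have hmono : MonotoneOn (quantile F) I := fun a ha b hb hab =>
    csInf_le_csInf ha.2 hb.1 fun x hx => hab.trans hx
  have hzero : ∀ t ∉ I, quantile F t = 0 := by
    intro t ht
    rcases not_and_or.1 ht with hemp | hbdd
    · rw [quantile, not_nonempty_iff_eq_empty.1 hemp, Real.sInf_empty]
    · exact Real.sInf_of_not_bddBelow hbdd
  refine measurable_of_Ioi fun x => ?_
  have hsplit : quantile F ⁻¹' Ioi x = (I ∩ quantile F ⁻¹' Ioi x) ∪ (Iᶜ ∩ {_t | x < 0}) := by
    ext t
    by_cases ht : t ∈ I <;> simp [ht, hzero]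
  have hconn : (I ∩ quantile F ⁻¹' Ioi x).OrdConnected := ordConnected_def.2 fun a ha b hb c hc =>
    ⟨hI.out ha.1 hb.1 hc, lt_of_lt_of_le ha.2 (hmono ha.1 (hI.out ha.1 hb.1 hc) hc.1)⟩
  rw [hsplit]
  exact hconn.measurableSet.union (hI.measurableSet.compl.inter (MeasurableSet.const _))

end Quantile

lemma Monotone.exists_preimage_Iic_eq_Iic {F : ℝ → ℝ} (hF : Monotone F) (hc : Continuous F)
    {t : ℝ} (hne : (F ⁻¹' Iic t).Nonempty) (hbdd : BddAbove (F ⁻¹' Iic t)) :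
    ∃ a, F ⁻¹' Iic t = Iic a ∧ F a = t := by
  have hmem : sSup (F ⁻¹' Iic t) ∈ F ⁻¹' Iic t := (isClosed_Iic.preimage hc).csSup_mem hne hbdd
  refine ⟨_, subset_antisymm (fun u hu => le_csSup hbdd hu) (fun u hu => (hF hu).trans hmem),
    le_antisymm hmem (not_lt.1 fun hlt => ?_)⟩
  have hnear : ∀ᶠ x in 𝓝[>] sSup (F ⁻¹' Iic t), F x < t :=
    ((hc.tendsto _).eventually_lt_const hlt).filter_mono nhdsWithin_le_nhds
  obtain ⟨x, hxt, hx⟩ := (hnear.and self_mem_nhdsWithin).exists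
  exact (le_csSup hbdd (show x ∈ F ⁻¹' Iic t from hxt.le)).not_gt hx

section Cdf

variable {μ : Measure ℝ} [IsProbabilityMeasure μ]

lemma measure_cdf_preimage_Iic (hc : Continuous (cdf μ)) {t : ℝ} (ht0 : 0 ≤ t) (ht1 : t < 1) :
    μ (cdf μ ⁻¹' Iic t) = ENNReal.ofReal t := by
  rcases (cdf μ ⁻¹' Iic t).eq_empty_or_nonempty with hemp | hne
  · have ht : t = 0 := by
      refine le_antisymm (not_lt.1 fun htpos => ?_) ht0
      obtain ⟨x, hx⟩ := ((tendsto_cdf_atBot μ).eventually_lt_const htpos).exists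
      exact (eq_empty_iff_forall_notMem.1 hemp) x (show cdf μ x ≤ t from hx.le)
    rw [hemp, measure_empty, ht, ENNReal.ofReal_zero]
  · obtain ⟨b, hb⟩ := ((tendsto_cdf_atTop μ).eventually_const_lt ht1).exists
    have hbdd : BddAbove (cdf μ ⁻¹' Iic t) := ⟨b, fun u hu =>
      le_of_not_gt fun hbu => (hb.trans_le (monotone_cdf μ hbu.le)).not_ge hu⟩
    obtain ⟨a, ha, hFa⟩ := (monotone_cdf μ).exists_preimage_Iic_eq_Iic hc hne hbdd
    rw [ha, ← ofReal_cdf, hFa]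

lemma map_cdf_eq_restrict_Ioc (hc : Continuous (cdf μ)) :
    μ.map (cdf μ) = volume.restrict (Ioc 0 1) := by
  refine Measure.ext_of_Iic _ _ fun t => ?_
  rw [Measure.map_apply (monotone_cdf μ).measurable measurableSet_Iic,
    Measure.restrict_apply measurableSet_Iic, inter_comm, Ioc_inter_Iic, Real.volume_Ioc, sub_zero]
  rcases lt_or_ge t 0 with ht0 | ht0
  · have hemp : cdf μ ⁻¹' Iic t = ∅ :=
      eq_empty_of_forall_notMem fun u hu => ht0.not_ge ((cdf_nonneg μ u).trans hu)
    rw [hemp, measure_empty, ENNReal.ofReal_of_nonpos (min_le_right _ _ |>.trans ht0.le)]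
  rcases lt_or_ge t 1 with ht1 | ht1
  · rw [measure_cdf_preimage_Iic hc ht0 ht1, min_eq_right ht1.le]
  · have huniv : cdf μ ⁻¹' Iic t = univ := eq_univ_of_forall fun u => (cdf_le_one μ u).trans ht1
    rw [huniv, measure_univ, min_eq_left ht1, ENNReal.ofReal_one]

lemma measure_cdf_preimage_Iic_cdf (hc : Continuous (cdf μ)) (r : ℝ) :
    μ (cdf μ ⁻¹' Iic (cdf μ r)) = μ (Iic r) := by
  rw [← Measure.map_apply (monotone_cdf μ).measurable measurableSet_Iic, map_cdf_eq_restrict_Ioc hc,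
    Measure.restrict_apply measurableSet_Iic, Iic_inter_Ioc_of_le (cdf_le_one μ r), Real.volume_Ioc,
    sub_zero, ofReal_cdf]

lemma ae_quantile_cdf_apply_cdf (hc : Continuous (cdf μ)) :
    ∀ᵐ u ∂μ, quantile (cdf μ) (cdf μ u) = u := by
  have hnull : ∀ r : ℝ, μ (cdf μ ⁻¹' Iic (cdf μ r) \ Iic r) = 0 := fun r => by
    rw [measure_sdiff (show Iic r ⊆ cdf μ ⁻¹' Iic (cdf μ r) from fun _ hu => monotone_cdf μ hu)
      measurableSet_Iic.nullMeasurableSet (measure_ne_top _ _), measure_cdf_preimage_Iic_cdf hc,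
      tsub_self]
  -- a flat stretch of `cdf μ` to the left of `u` contains a rational `r`
  have hbad : {u | ¬ ∀ y < u, cdf μ y < cdf μ u} ⊆
      ⋃ r : ℚ, cdf μ ⁻¹' Iic (cdf μ r) \ Iic (r : ℝ) := by
    intro u hu
    obtain ⟨y, hyu, hy⟩ : ∃ y < u, cdf μ u ≤ cdf μ y := by simpa using hu
    obtain ⟨r, hyr, hru⟩ := exists_rat_btwn hyu
    exact mem_iUnion.2 ⟨r, hy.trans (monotone_cdf μ hyr.le), not_le.2 hru⟩
  have hstrict : ∀ᵐ u ∂μ, ∀ y < u, cdf μ y < cdf μ u :=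
    measure_mono_null hbad (measure_iUnion_null fun r => hnull r)
  filter_upwards [hstrict] with u hu using quantile_apply_self (monotone_cdf μ) hu

lemma integral_comp_cdf {E : Type*} [NormedAddCommGroup E] [NormedSpace ℝ E]
    (hc : Continuous (cdf μ)) {g : ℝ → E}
    (hg : AEStronglyMeasurable g (volume.restrict (Ioc 0 1))) :
    ∫ u, g (cdf μ u) ∂μ = ∫ t in Ioo 0 1, g t := by
  rw [← integral_map (monotone_cdf μ).measurable.aemeasurable (by rwa [map_cdf_eq_restrict_Ioc hc]),
    map_cdf_eq_restrict_Ioc hc, integral_Ioc_eq_integral_Ioo]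

end Cdf

section Density

variable {α : Type*} [MeasurableSpace α] {ν : Measure α} {f : α → ℝ}

lemma isProbabilityMeasure_withDensity_ofReal (hf0 : 0 ≤ᵐ[ν] f) (hf1 : ∫ x, f x ∂ν = 1) :
    IsProbabilityMeasure (ν.withDensity fun x => ENNReal.ofReal (f x)) := by
  constructor
  rw [withDensity_apply _ MeasurableSet.univ, Measure.restrict_univ,
    ← ofReal_integral_eq_lintegral_ofReal (integrable_of_integral_eq_one hf1) hf0, hf1,
    ENNReal.ofReal_one]

lemma integral_withDensity_ofReal {E : Type*} [NormedAddCommGroup E] [NormedSpace ℝ E]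
    (hf : AEMeasurable f ν) (hf0 : 0 ≤ᵐ[ν] f) (g : α → E) :
    ∫ x, g x ∂(ν.withDensity fun x => ENNReal.ofReal (f x)) = ∫ x, f x • g x ∂ν := by
  rw [integral_withDensity_eq_integral_toReal_smul₀ hf.ennreal_ofReal
    (ae_of_all _ fun _ => ENNReal.ofReal_lt_top)]
  refine integral_congr_ae (hf0.mono fun x hx => ?_)
  simp only [ENNReal.toReal_ofReal hx]

lemma measureReal_withDensity_ofReal (hf : Integrable f ν) (hf0 : 0 ≤ᵐ[ν] f) {s : Set α}
    (hs : MeasurableSet s) :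
    (ν.withDensity fun x => ENNReal.ofReal (f x)).real s = ∫ x in s, f x ∂ν := by
  rw [measureReal_def, withDensity_apply _ hs,
    ← ofReal_integral_eq_lintegral_ofReal hf.integrableOn (ae_restrict_of_ae hf0),
    ENNReal.toReal_ofReal (setIntegral_nonneg_of_ae_restrict (ae_restrict_of_ae hf0))]

end Density

theorem monotone_transport_cost_general
    (f F G : ℝ → ℝ)
    (hFdens : ∀ x, F x = ∫ u in Iic x, f u)
    (hf0 : ∀ u, 0 ≤ f u) (hf1 : ∫ u, f u = 1)
    (hFcont : Continuous F) :
    ∫ u, (quantile G (F u) - u) ^ 2 * f u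
      = ∫ t in Ioo (0 : ℝ) 1, (quantile F t - quantile G t) ^ 2 := by
  have hf : Integrable f := integrable_of_integral_eq_one hf1
  obtain ⟨μ, hμ⟩ : ∃ μ : Measure ℝ, μ = volume.withDensity fun u => ENNReal.ofReal (f u) := ⟨_, rfl⟩
  have : IsProbabilityMeasure μ :=
    hμ ▸ isProbabilityMeasure_withDensity_ofReal (ae_of_all _ hf0) hf1
  have hcdf : ⇑(cdf μ) = F := funext fun x => by
    rw [cdf_eq_real, hμ, measureReal_withDensity_ofReal hf (ae_of_all _ hf0) measurableSet_Iic,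
      hFdens]
  subst hcdf
  calc ∫ u, (quantile G (cdf μ u) - u) ^ 2 * f u
      = ∫ u, (quantile G (cdf μ u) - u) ^ 2 ∂μ := by
        rw [hμ, integral_withDensity_ofReal hf.aemeasurable (ae_of_all _ hf0)]
        simp only [smul_eq_mul, mul_comm]
    _ = ∫ u, (quantile (cdf μ) (cdf μ u) - quantile G (cdf μ u)) ^ 2 ∂μ := by
        refine integral_congr_ae ((ae_quantile_cdf_apply_cdf hFcont).mono fun u hu => ?_)
        simp only [hu, ← neg_sub u, neg_sq]
    _ = ∫ t in Ioo 0 1, (quantile (cdf μ) t - quantile G t) ^ 2 :=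
        integral_comp_cdf hFcont
          (((measurable_quantile _).sub (measurable_quantile G)).pow_const 2).aestronglyMeasurable

/-- If `f` is a density with distribution function `F` (continuous, strictly increasing on its
support) and `G` is a distribution function, both with finite second moments, then the monotone
transport `T = G⁻¹ ∘ F` attains the optimal transport cost:
`∫ (T(u) - u)² f(u) du = ∫_0^1 (F⁻¹(t) - G⁻¹(t))² dt`. -/
theorem monotone_transport_cost
    (f F G : ℝ → ℝ)
    (hFdens : ∀ x, F x = ∫ u in Iic x, f u)
    (hf0 : ∀ u, 0 ≤ f u) (hf1 : ∫ u, f u = 1)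
    (hFcont : Continuous F)
    (hFstrict : StrictMonoOn F (Function.support f))
    (hGmono : Monotone G)
    (hm2f : Integrable (fun u => u ^ 2 * f u))
    (hm2G : IntegrableOn (fun t => (quantile G t) ^ 2) (Ioo (0 : ℝ) 1)) :
    ∫ u, (quantile G (F u) - u) ^ 2 * f u
      = ∫ t in Ioo (0 : ℝ) 1, (quantile F t - quantile G t) ^ 2 :=
  monotone_transport_cost_general f F G hFdens hf0 hf1 hFcont
end

section
/- Let F_{⊕,1}, F_{⊕,2} be continuous strictly increasing distribution functions with densities f_{⊕,1}, f_{⊕,2}, and let T_1, T_2 be measurable maps with finite Wasserstein inner products. Set T_{⊕,12} = F_{⊕,1}^{-1} ∘ F_{⊕,2} and define the parallel transport T̃_1 = T_1 ∘ T_{⊕,12} - T_{⊕,12} + id and T̃_2 = T_2 ∘ T_{⊕,12}^{-1} - T_{⊕,12}^{-1} + id, where T_{⊕,12}^{-1} = F_{⊕,2}^{-1} ∘ F_{⊕,1}. Then ⟨T̃_1, T_2⟩_{f_{⊕,2}} = ⟨T_1, T̃_2⟩_{f_{⊕,1}}, where ⟨S_1,S_2⟩_f = ∫ (S_1(u)-u)(S_2(u)-u)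 f(u) du. -/
open MeasureTheory Set Filter Topology
open scoped NNReal ENNReal

lemma quantile_eq_of_eq {F : ℝ → ℝ} (hs : StrictMono F) {x t : ℝ} (h : F x = t) :
    quantile F t = x := by
  have hset : {y : ℝ | t ≤ F y} = Ici x := by
    ext y
    simp only [mem_setOf_eq, mem_Ici, ← h, hs.le_iff_le]
  rw [quantile, hset, csInf_Ici]

lemma exists_F_eq {F : ℝ → ℝ} (hc : Continuous F) (hs : StrictMono F)
    (h0 : Tendsto F atBot (𝓝 0)) (h1 : Tendsto F atTop (𝓝 1))
    {t : ℝ} (ht : t ∈ Ioo (0:ℝ) 1) : ∃ x, F x = t := by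
  obtain ⟨a, ha⟩ := (h0.eventually (gt_mem_nhds ht.1)).exists
  obtain ⟨b, hb⟩ := (h1.eventually (lt_mem_nhds ht.2)).exists
  have hab : a ≤ b := (hs.lt_iff_lt.mp (ha.trans hb)).le
  obtain ⟨x, -, hx⟩ := intermediate_value_Icc hab hc.continuousOn ⟨ha.le, hb.le⟩
  exact ⟨x, hx⟩

lemma tendsto_cdf_atTop {f : ℝ → ℝ} (hf : Integrable f) :
    Tendsto (fun x : ℝ => ∫ u in Iic x, f u) atTop (𝓝 (∫ u, f u)) :=
  (aecover_Iic tendsto_id).integral_tendsto_of_countably_generated hf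

lemma tendsto_cdf_atBot {f : ℝ → ℝ} (hf : Integrable f) :
    Tendsto (fun x : ℝ => ∫ u in Iic x, f u) atBot (𝓝 0) := by
  have h1 : Tendsto (fun x : ℝ => ∫ u in Ioi x, f u) atBot (𝓝 (∫ u, f u)) :=
    (aecover_Ioi tendsto_id).integral_tendsto_of_countably_generated hf
  have h2 : ∀ x : ℝ, ∫ u in Iic x, f u = (∫ u, f u) - ∫ u in Ioi x, f u := by
    intro x
    rw [eq_sub_iff_add_eq, ← compl_Iic]
    exact integral_add_compl measurableSet_Iic hf
  simp only [h2]
  have h3 := (tendsto_const_nhds (x := ∫ u, f u) (f := atBot)).sub h1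
  simpa using h3

lemma mem_Ioo_of_tendsto {F : ℝ → ℝ} (hs : StrictMono F)
    (h0 : Tendsto F atBot (𝓝 0)) (h1 : Tendsto F atTop (𝓝 1)) (x : ℝ) :
    F x ∈ Ioo (0:ℝ) 1 := by
  constructor
  · have h := hs.monotone.le_of_tendsto h0 (x - 1)
    exact lt_of_le_of_lt h (hs (by linarith))
  · have h := hs.monotone.ge_of_tendsto h1 (x + 1)
    exact lt_of_lt_of_le (hs (by linarith)) h

lemma integral_withDensity_ofReal_s5 {g : ℝ → ℝ} (hg : Measurable g)
    (hgnn : 0 ≤ᵐ[volume] g) (h : ℝ → ℝ) :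
    ∫ u, h u ∂(volume.withDensity fun u => ENNReal.ofReal (g u)) = ∫ u, h u * g u := by
  have heq : (fun u => ENNReal.ofReal (g u)) = fun u => ((g u).toNNReal : ℝ≥0∞) := rfl
  rw [heq, integral_withDensity_eq_integral_smul (hg.real_toNNReal)]
  refine integral_congr_ae ?_
  filter_upwards [hgnn] with u hu
  simp [NNReal.smul_def, Real.coe_toNNReal _ hu, mul_comm]

/-- Symmetry of parallel transport for the Wasserstein inner product.  Let `F₁, F₂` be
continuous strictly increasing distribution functions with densities `f₁, f₂`, and let
`T₁, T₂` be measurable transport maps.  With `T_{⊕,12} = F₁⁻¹ ∘ F₂`,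
`T_{⊕,12}⁻¹ = F₂⁻¹ ∘ F₁`, and the parallel transports
`T̃₁ = T₁ ∘ T_{⊕,12} - T_{⊕,12} + id` and `T̃₂ = T₂ ∘ T_{⊕,12}⁻¹ - T_{⊕,12}⁻¹ + id`,
one has `⟨T̃₁, T₂⟩_{f₂} = ⟨T₁, T̃₂⟩_{f₁}`, where
`⟨S₁,S₂⟩_f = ∫ (S₁(u)-u)(S₂(u)-u) f(u) du`. -/
theorem parallel_transport_symmetry
    (f₁ f₂ F₁ F₂ T₁ T₂ : ℝ → ℝ)
    (hF₁dens : ∀ x, F₁ x = ∫ u in Iic x, f₁ u)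
    (hF₂dens : ∀ x, F₂ x = ∫ u in Iic x, f₂ u)
    (hf₁0 : ∀ u, 0 ≤ f₁ u) (hf₂0 : ∀ u, 0 ≤ f₂ u)
    (hf₁1 : ∫ u, f₁ u = 1) (hf₂1 : ∫ u, f₂ u = 1)
    (hF₁cont : Continuous F₁) (hF₂cont : Continuous F₂)
    (hF₁strict : StrictMono F₁) (hF₂strict : StrictMono F₂)
    (hT₁ : Measurable T₁) (hT₂ : Measurable T₂)
    (hint₁ : Integrable (fun u =>
      ((T₁ (quantile F₁ (F₂ u)) - quantile F₁ (F₂ u) + u) - u) * (T₂ u - u) * f₂ u))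
    (hint₂ : Integrable (fun v =>
      (T₁ v - v) * ((T₂ (quantile F₂ (F₁ v)) - quantile F₂ (F₁ v) + v) - v) * f₁ v)) :
    ∫ u, ((T₁ (quantile F₁ (F₂ u)) - quantile F₁ (F₂ u) + u) - u) * (T₂ u - u) * f₂ u
      = ∫ v, (T₁ v - v) * ((T₂ (quantile F₂ (F₁ v)) - quantile F₂ (F₁ v) + v) - v) * f₁ v := by
  have hif₁ : Integrable f₁ := by
    by_contra h; rw [integral_undef h] at hf₁1; norm_num at hf₁1
  have hif₂ : Integrable f₂ := by
    by_contra h; rw [integral_undef h] at hf₂1; norm_num at hf₂1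
  obtain ⟨g₁, hg₁sm, hg₁e⟩ := hif₁.aestronglyMeasurable
  obtain ⟨g₂, hg₂sm, hg₂e⟩ := hif₂.aestronglyMeasurable
  have hg₁m : Measurable g₁ := hg₁sm.measurable
  have hg₂m : Measurable g₂ := hg₂sm.measurable
  have hg₁i : Integrable g₁ := hif₁.congr hg₁e
  have hg₂i : Integrable g₂ := hif₂.congr hg₂e
  have hg₁nn : 0 ≤ᵐ[volume] g₁ := by
    filter_upwards [hg₁e] with x hx; rw [← hx]; exact hf₁0 x
  have hg₂nn : 0 ≤ᵐ[volume] g₂ := by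
    filter_upwards [hg₂e] with x hx; rw [← hx]; exact hf₂0 x
  have hg₁1 : ∫ u, g₁ u = 1 := by rw [← integral_congr_ae hg₁e]; exact hf₁1
  have hg₂1 : ∫ u, g₂ u = 1 := by rw [← integral_congr_ae hg₂e]; exact hf₂1
  have hF₁g : ∀ x, F₁ x = ∫ u in Iic x, g₁ u := fun x => by
    rw [hF₁dens x]; exact integral_congr_ae (ae_restrict_of_ae hg₁e)
  have hF₂g : ∀ x, F₂ x = ∫ u in Iic x, g₂ u := fun x => by
    rw [hF₂dens x]; exact integral_congr_ae (ae_restrict_of_ae hg₂e)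
  -- limits of CDFs
  have hF₁top : Tendsto F₁ atTop (𝓝 1) := by
    have h := tendsto_cdf_atTop hif₁; rw [hf₁1] at h
    exact h.congr fun x => (hF₁dens x).symm
  have hF₂top : Tendsto F₂ atTop (𝓝 1) := by
    have h := tendsto_cdf_atTop hif₂; rw [hf₂1] at h
    exact h.congr fun x => (hF₂dens x).symm
  have hF₁bot : Tendsto F₁ atBot (𝓝 0) :=
    (tendsto_cdf_atBot hif₁).congr fun x => (hF₁dens x).symm
  have hF₂bot : Tendsto F₂ atBot (𝓝 0) :=
    (tendsto_cdf_atBot hif₂).congr fun x => (hF₂dens x).symm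
  have hF₁mem : ∀ x, F₁ x ∈ Ioo (0:ℝ) 1 := mem_Ioo_of_tendsto hF₁strict hF₁bot hF₁top
  have hF₂mem : ∀ x, F₂ x ∈ Ioo (0:ℝ) 1 := mem_Ioo_of_tendsto hF₂strict hF₂bot hF₂top
  -- quantiles invert the CDFs
  have hQ₁ : ∀ t ∈ Ioo (0:ℝ) 1, F₁ (quantile F₁ t) = t := by
    intro t ht
    obtain ⟨x, hx⟩ := exists_F_eq hF₁cont hF₁strict hF₁bot hF₁top ht
    rw [quantile_eq_of_eq hF₁strict hx, hx]
  have hQ₂ : ∀ t ∈ Ioo (0:ℝ) 1, F₂ (quantile F₂ t) = t := by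
    intro t ht
    obtain ⟨x, hx⟩ := exists_F_eq hF₂cont hF₂strict hF₂bot hF₂top ht
    rw [quantile_eq_of_eq hF₂strict hx, hx]
  set T : ℝ → ℝ := fun u => quantile F₁ (F₂ u) with hT
  set S : ℝ → ℝ := fun v => quantile F₂ (F₁ v) with hS
  have hFT : ∀ u, F₁ (T u) = F₂ u := fun u => hQ₁ _ (hF₂mem u)
  have hFS : ∀ v, F₂ (S v) = F₁ v := fun v => hQ₂ _ (hF₁mem v)
  have hST : ∀ u, S (T u) = u := by
    intro u
    show quantile F₂ (F₁ (T u)) = u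
    rw [hFT u]
    exact quantile_eq_of_eq hF₂strict rfl
  have hTmono : Monotone T := by
    intro u u' huu'
    rw [← hF₁strict.le_iff_le, hFT, hFT]
    exact (hF₂strict.monotone huu')
  have hSmono : Monotone S := by
    intro v v' hvv'
    rw [← hF₂strict.le_iff_le, hFS, hFS]
    exact (hF₁strict.monotone hvv')
  have hTmeas : Measurable T := hTmono.measurable
  have hSmeas : Measurable S := hSmono.measurable
  -- measures
  set μ₁ : Measure ℝ := volume.withDensity (fun u => ENNReal.ofReal (g₁ u)) with hμ₁
  set μ₂ : Measure ℝ := volume.withDensity (fun u => ENNReal.ofReal (g₂ u)) with hμ₂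
  have hμ₁Iic : ∀ x, μ₁ (Iic x) = ENNReal.ofReal (F₁ x) := by
    intro x
    rw [hμ₁, withDensity_apply _ measurableSet_Iic,
      ← ofReal_integral_eq_lintegral_ofReal hg₁i.restrict (ae_restrict_of_ae hg₁nn), hF₁g]
  have hμ₂Iic : ∀ x, μ₂ (Iic x) = ENNReal.ofReal (F₂ x) := by
    intro x
    rw [hμ₂, withDensity_apply _ measurableSet_Iic,
      ← ofReal_integral_eq_lintegral_ofReal hg₂i.restrict (ae_restrict_of_ae hg₂nn), hF₂g]
  have hfin₁ : IsFiniteMeasure μ₁ := by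
    refine isFiniteMeasure_withDensity ?_
    rw [← ofReal_integral_eq_lintegral_ofReal hg₁i hg₁nn, hg₁1]
    exact ENNReal.ofReal_ne_top
  have hfin₂ : IsFiniteMeasure μ₂ := by
    refine isFiniteMeasure_withDensity ?_
    rw [← ofReal_integral_eq_lintegral_ofReal hg₂i hg₂nn, hg₂1]
    exact ENNReal.ofReal_ne_top
  -- the pushforward identity
  have hmap : μ₂.map T = μ₁ := by
    refine Measure.ext_of_Iic _ _ (fun x => ?_)
    rw [Measure.map_apply hTmeas measurableSet_Iic]
    have hpre : T ⁻¹' (Iic x) = Iic (S x) := by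
      ext u
      simp only [mem_preimage, mem_Iic]
      rw [← hF₁strict.le_iff_le, hFT, ← hFS, hF₂strict.le_iff_le]
    rw [hpre, hμ₂Iic, hμ₁Iic, hFS]
  -- the integrand on the right
  set G : ℝ → ℝ := fun v => (T₁ v - v) * (T₂ (S v) - S v) with hG
  have hGmeas : Measurable G :=
    ((hT₁.sub measurable_id).mul ((hT₂.comp hSmeas).sub hSmeas))
  -- main computation
  have key : ∫ u, G (T u) ∂μ₂ = ∫ v, G v ∂μ₁ := by
    rw [← hmap, integral_map hTmeas.aemeasurable hGmeas.aestronglyMeasurable]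
  calc ∫ u, ((T₁ (T u) - T u + u) - u) * (T₂ u - u) * f₂ u
      = ∫ u, G (T u) * g₂ u := by
        refine integral_congr_ae ?_
        filter_upwards [hg₂e] with u hu
        rw [hG]
        simp only [hST u]
        rw [hu]; ring
    _ = ∫ u, G (T u) ∂μ₂ := (integral_withDensity_ofReal_s5 hg₂m hg₂nn _).symm
    _ = ∫ v, G v ∂μ₁ := key
    _ = ∫ v, G v * g₁ v := integral_withDensity_ofReal_s5 hg₁m hg₁nn _
    _ = ∫ v, (T₁ v - v) * ((T₂ (S v) - S v + v) - v) * f₁ v := by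
        refine integral_congr_ae ?_
        filter_upwards [hg₁e] with v hv
        rw [hG, hv]; ring
end

section
/- The Wasserstein–Fréchet mean of a random density F with square-integrable random quantile function F^{-1} is characterized by its quantile function: the minimizer over distribution functions G of E[d_W^2(F, G)] = E[∫_0^1 (F^{-1}(t) - G^{-1}(t))^2 dt] is attained when G^{-1}(t) = E[F^{-1}(t)] for almost every t, provided t ↦ E[F^{-1}(t)] is a valid quantile function (nondecreasing and left-continuous). -/
/-! For each fixed `t`, `E[(X(t) - c)²]` is minimized at `c = E[X(t)]`, and by Fubini the
Fréchet functional is the `t`-integral of these quantities. The only analytic input is that the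
pointwise mean is again square integrable, which follows from Jensen's inequality
`E[X(t)]² ≤ E[X(t)²]`. -/

open MeasureTheory Set ProbabilityTheory

section FrechetMean

variable {Ω T : Type*} [MeasurableSpace Ω] [MeasurableSpace T] {μ : Measure Ω}
  [IsProbabilityMeasure μ] {ν : Measure T} [SFinite ν]

/-- `Var[Y] = Var[Y - c] ≤ E[(Y - c)²]`. -/
lemma integral_sq_sub_integral_le {Y : Ω → ℝ} (hY : AEStronglyMeasurable Y μ) (c : ℝ) :
    ∫ ω, (Y ω - ∫ ω', Y ω' ∂μ) ^ 2 ∂μ ≤ ∫ ω, (Y ω - c) ^ 2 ∂μ := by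
  rw [← variance_eq_integral hY.aemeasurable, ← variance_sub_const hY c]
  exact variance_le_expectation_sq (by fun_prop)

lemma sq_integral_le_integral_sq {Y : Ω → ℝ} (hY : MemLp Y 2 μ) :
    (∫ ω, Y ω ∂μ) ^ 2 ≤ ∫ ω, Y ω ^ 2 ∂μ := by
  have h := variance_nonneg Y μ
  rw [variance_eq_sub hY] at h
  simpa using h

lemma memLp_two_integral_prod_right {f : Ω × T → ℝ} (hf : StronglyMeasurable f)
    (hf2 : MemLp f 2 (μ.prod ν)) : MemLp (fun t => ∫ ω, f (ω, t) ∂μ) 2 ν := by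
  have hmean : StronglyMeasurable fun t => ∫ ω, f (ω, t) ∂μ := hf.integral_prod_left'
  refine (memLp_two_iff_integrable_sq hmean.aestronglyMeasurable).2 <|
    hf2.integrable_sq.integral_prod_right.mono' (hmean.pow 2).aestronglyMeasurable ?_
  filter_upwards [hf2.integrable_sq.prod_left_ae] with t ht
  have hslice : MemLp (fun ω => f (ω, t)) 2 μ := (memLp_two_iff_integrable_sq
    (hf.comp_measurable measurable_prodMk_right).aestronglyMeasurable).2 ht
  rw [Real.norm_of_nonneg (sq_nonneg _)]
  exact sq_integral_le_integral_sq hslice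

lemma integrable_sq_sub_comp_snd {f : Ω × T → ℝ} {h : T → ℝ} (hf : MemLp f 2 (μ.prod ν))
    (hh : MemLp h 2 ν) : Integrable (fun q => (f q - h q.2) ^ 2) (μ.prod ν) :=
  (hf.sub (hh.comp_measurePreserving measurePreserving_snd)).integrable_sq

theorem integral_integral_sq_sub_integral_le {X : Ω → T → ℝ}
    (hX : StronglyMeasurable (Function.uncurry X))
    (hX2 : Integrable (fun q : Ω × T => X q.1 q.2 ^ 2) (μ.prod ν)) {g : T → ℝ}
    (hg : MemLp g 2 ν) :
    ∫ ω, (∫ t, (X ω t - ∫ ω', X ω' t ∂μ) ^ 2 ∂ν) ∂μ ≤ ∫ ω, (∫ t, (X ω t - g t) ^ 2 ∂ν) ∂μ := by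
  have hXL2 : MemLp (Function.uncurry X) 2 (μ.prod ν) :=
    (memLp_two_iff_integrable_sq hX.aestronglyMeasurable).2 hX2
  have hmean_dev := integrable_sq_sub_comp_snd hXL2 (memLp_two_integral_prod_right hX hXL2)
  have hg_dev := integrable_sq_sub_comp_snd hXL2 hg
  calc ∫ ω, (∫ t, (X ω t - ∫ ω', X ω' t ∂μ) ^ 2 ∂ν) ∂μ
      = ∫ t, (∫ ω, (X ω t - ∫ ω', X ω' t ∂μ) ^ 2 ∂μ) ∂ν := integral_integral_swap hmean_dev
    _ ≤ ∫ t, (∫ ω, (X ω t - g t) ^ 2 ∂μ) ∂ν :=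
      integral_mono_of_nonneg (.of_forall fun t => integral_nonneg fun ω => sq_nonneg _)
        hg_dev.integral_prod_right (.of_forall fun t => integral_sq_sub_integral_le
          (hX.comp_measurable measurable_prodMk_right).aestronglyMeasurable (g t))
    _ = ∫ ω, (∫ t, (X ω t - g t) ^ 2 ∂ν) ∂μ := (integral_integral_swap hg_dev).symm

end FrechetMean

theorem wasserstein_frechet_mean_quantile_general
    {Ω : Type*} [MeasurableSpace Ω] (μ : Measure Ω) [IsProbabilityMeasure μ]
    (X : Ω → ℝ → ℝ)
    (hX : Measurable (Function.uncurry X))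
    (hX2 : Integrable (fun q : Ω × ℝ => (X q.1 q.2) ^ 2)
      (μ.prod ((volume : Measure ℝ).restrict (Ioo (0 : ℝ) 1)))) :
    ∀ g : ℝ → ℝ, MonotoneOn g (Ioo (0 : ℝ) 1) →
      IntegrableOn (fun t => (g t) ^ 2) (Ioo (0 : ℝ) 1) →
      ∫ ω, (∫ t in Ioo (0 : ℝ) 1, (X ω t - ∫ ω', X ω' t ∂μ) ^ 2) ∂μ
        ≤ ∫ ω, (∫ t in Ioo (0 : ℝ) 1, (X ω t - g t) ^ 2) ∂μ := by
  intro g hg_mono hg_sq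
  have hg_meas : AEMeasurable g (volume.restrict (Ioo (0 : ℝ) 1)) :=
    aemeasurable_restrict_of_monotoneOn measurableSet_Ioo hg_mono
  exact integral_integral_sq_sub_integral_le hX.stronglyMeasurable hX2
    ((memLp_two_iff_integrable_sq hg_meas.aestronglyMeasurable).2 hg_sq)

/-- Characterization of the Wasserstein–Fréchet mean via quantile functions: if `X(ω,·)` is the
random quantile function of a random density, square-integrable, and `t ↦ E[X(t)]` is a valid
quantile function (nondecreasing), then for every other quantile function `g` (nondecreasing,
square-integrable),
`E[∫_0^1 (X(t) - E X(t))² dt] ≤ E[∫_0^1 (X(t) - g(t))² dt]`;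
i.e. the Fréchet functional `G ↦ E[d_W²(F,G)]` is minimized at the distribution whose quantile
function is the pointwise mean `t ↦ E[F⁻¹(t)]`. -/
theorem wasserstein_frechet_mean_quantile
    {Ω : Type*} [MeasurableSpace Ω] (μ : Measure Ω) [IsProbabilityMeasure μ]
    (X : Ω → ℝ → ℝ)
    (hX : Measurable (Function.uncurry X))
    (hXmono : ∀ᵐ ω ∂μ, MonotoneOn (X ω) (Ioo (0 : ℝ) 1))
    (hX2 : Integrable (fun q : Ω × ℝ => (X q.1 q.2) ^ 2)
      (μ.prod ((volume : Measure ℝ).restrict (Ioo (0 : ℝ) 1))))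
    (hmean_mono : MonotoneOn (fun t => ∫ ω, X ω t ∂μ) (Ioo (0 : ℝ) 1)) :
    ∀ g : ℝ → ℝ, MonotoneOn g (Ioo (0 : ℝ) 1) →
      IntegrableOn (fun t => (g t) ^ 2) (Ioo (0 : ℝ) 1) →
      ∫ ω, (∫ t in Ioo (0 : ℝ) 1, (X ω t - ∫ ω', X ω' t ∂μ) ^ 2) ∂μ
        ≤ ∫ ω, (∫ t in Ioo (0 : ℝ) 1, (X ω t - g t) ^ 2) ∂μ :=
  wasserstein_frechet_mean_quantile_general μ X hX hX2
end

section
/- Let (X_i, Y_i), i=1,...,n, be i.i.d. pairs of random elements of L^2[0,1] with E‖X_1‖^2 < ∞ and E‖Y_1‖^2 < ∞. Define the empirical Wasserstein covariance Ĉ_n = n^{-1} Σ_i ⟨X_i - X̄, Y_i - Ȳ⟩, where ⟨·,·⟩ is the L^2[0,1] inner product and X̄, Ȳ are the sample means. Then Ĉ_n converges almost surely to C = E[⟨X_1 - E X_1, Y_1 - E Y_1⟩]. -/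
/-!
Expanding the inner products, `Ĉₙ = n⁻¹ Σᵢ ⟨Xᵢ, Yᵢ⟩ - ⟨X̄, Ȳ⟩` and
`C = E⟨X₁, Y₁⟩ - ⟨E X₁, E Y₁⟩`. The strong law of large numbers, in `L²[0,1]` for `Xᵢ` and `Yᵢ`
and in `ℝ` for `⟨Xᵢ, Yᵢ⟩` (integrable by Cauchy–Schwarz), makes each term converge, and the
inner product is continuous.
-/

open MeasureTheory Filter

/-- The Hilbert space L²[0,1]. -/
noncomputable abbrev L2unit : Type :=
  MeasureTheory.Lp ℝ 2 ((volume : Measure ℝ).restrict (Set.Icc (0 : ℝ) 1))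

open ProbabilityTheory Finset
open scoped RealInnerProductSpace

section InnerProduct

variable {E : Type*} [NormedAddCommGroup E] [InnerProductSpace ℝ E]

theorem inv_card_mul_sum_inner_sub_average {ι : Type*} (s : Finset ι) (x y : ι → E) :
    (#s : ℝ)⁻¹ * ∑ i ∈ s, ⟪x i - (#s : ℝ)⁻¹ • ∑ j ∈ s, x j, y i - (#s : ℝ)⁻¹ • ∑ j ∈ s, y j⟫
      = (#s : ℝ)⁻¹ * ∑ i ∈ s, ⟪x i, y i⟫
        - ⟪(#s : ℝ)⁻¹ • ∑ j ∈ s, x j, (#s : ℝ)⁻¹ • ∑ j ∈ s, y j⟫ := by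
  rcases s.eq_empty_or_nonempty with rfl | hs
  · simp
  have hcard : (#s : ℝ) ≠ 0 := by exact_mod_cast hs.card_pos.ne'
  simp only [inner_sub_left, inner_sub_right, real_inner_smul_left, real_inner_smul_right,
    sum_sub_distrib, ← mul_sum, ← sum_inner, ← inner_sum, sum_const]
  rw [← Nat.cast_smul_eq_nsmul ℝ, real_inner_smul_left]
  field_simp
  ring

variable {Ω : Type*} [MeasurableSpace Ω] {μ : Measure Ω}

theorem MeasureTheory.MemLp.integrable_inner {f g : Ω → E} (hf : MemLp f 2 μ)
    (hg : MemLp g 2 μ) :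
    Integrable (fun ω => ⟪f ω, g ω⟫) μ :=
  (L2.integrable_inner (hf.toLp f) (hg.toLp g)).congr <| by
    filter_upwards [hf.coeFn_toLp, hg.coeFn_toLp] with ω hfω hgω
    rw [hfω, hgω]

theorem integral_inner_sub_integral [CompleteSpace E] [IsProbabilityMeasure μ] {X Y : Ω → E}
    (hX : Integrable X μ) (hY : Integrable Y μ) (hXY : Integrable (fun ω => ⟪X ω, Y ω⟫) μ) :
    ∫ ω, ⟪X ω - ∫ ω', X ω' ∂μ, Y ω - ∫ ω', Y ω' ∂μ⟫ ∂μ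
      = ∫ ω, ⟪X ω, Y ω⟫ ∂μ - ⟪∫ ω, X ω ∂μ, ∫ ω, Y ω ∂μ⟫ := by
  set mX := ∫ ω, X ω ∂μ
  set mY := ∫ ω, Y ω ∂μ
  have hmY : Integrable (fun ω => ⟪mY, X ω⟫) μ := (innerSL ℝ mY).integrable_comp hX
  have hmX : Integrable (fun ω => ⟪mX, Y ω⟫) μ := (innerSL ℝ mX).integrable_comp hY
  have hexpand : ∀ ω, ⟪X ω - mX, Y ω - mY⟫ = ⟪X ω, Y ω⟫ - ⟪mY, X ω⟫ - ⟪mX, Y ω⟫ + ⟪mX, mY⟫ := by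
    intro ω
    simp only [inner_sub_left, inner_sub_right, real_inner_comm mY]
    ring
  simp only [hexpand]
  rw [integral_add, integral_sub, integral_sub hXY hmY, integral_inner hX, integral_inner hY,
    integral_const, probReal_univ, one_smul, real_inner_comm mY]
  · ring
  exacts [hXY.sub hmY, hmX, (hXY.sub hmY).sub hmX, integrable_const _]

end InnerProduct

theorem strong_law_ae_comp {Ω α E : Type*} [MeasurableSpace Ω] {μ : Measure Ω}
    [MeasurableSpace α] [NormedAddCommGroup E] [NormedSpace ℝ E] [CompleteSpace E]
    [MeasurableSpace E] [BorelSpace E] {Z : ℕ → Ω → α} (hindep : iIndepFun Z μ)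
    (hident : ∀ i, IdentDistrib (Z i) (Z 0) μ μ) {f : α → E} (hf : Measurable f)
    (hint : Integrable (fun ω => f (Z 0 ω)) μ) :
    ∀ᵐ ω ∂μ, Tendsto (fun n : ℕ => (n : ℝ)⁻¹ • ∑ i ∈ range n, f (Z i ω)) atTop
      (nhds (∫ ω, f (Z 0 ω) ∂μ)) :=
  strong_law_ae (fun i => f ∘ Z i) hint (fun _ _ hij => (hindep.indepFun hij).comp hf hf)
    fun i => (hident i).comp hf

theorem empirical_wasserstein_covariance_consistent_general
    [MeasurableSpace L2unit] [BorelSpace L2unit]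
    {Ω : Type*} [MeasurableSpace Ω] (μ : Measure Ω) [IsProbabilityMeasure μ]
    (Z : ℕ → Ω → L2unit × L2unit)
    (hindep : ProbabilityTheory.iIndepFun Z μ)
    (hident : ∀ i, ProbabilityTheory.IdentDistrib (Z i) (Z 0) μ μ)
    (hX2 : Integrable (fun ω => ‖(Z 0 ω).1‖ ^ 2) μ)
    (hY2 : Integrable (fun ω => ‖(Z 0 ω).2‖ ^ 2) μ) :
    ∀ᵐ ω ∂μ, Tendsto
      (fun n : ℕ =>
        (n : ℝ)⁻¹ * ∑ i ∈ Finset.range n,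
          (inner ℝ ((Z i ω).1 - (n : ℝ)⁻¹ • ∑ j ∈ Finset.range n, (Z j ω).1)
                 ((Z i ω).2 - (n : ℝ)⁻¹ • ∑ j ∈ Finset.range n, (Z j ω).2) : ℝ))
      atTop
      (nhds (∫ ω', (inner ℝ ((Z 0 ω').1 - ∫ ω'', (Z 0 ω'').1 ∂μ)
                          ((Z 0 ω').2 - ∫ ω'', (Z 0 ω'').2 ∂μ) : ℝ) ∂μ)) := by
  -- makes `L2unit` second countable, so that `AEMeasurable` upgrades to `AEStronglyMeasurable`
  have : Fact ((2 : ENNReal) ≠ ⊤) := ⟨ENNReal.ofNat_ne_top⟩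
  have hZ0 : AEStronglyMeasurable (Z 0) μ := (hident 0).aemeasurable_fst.aestronglyMeasurable
  have hX : MemLp (fun ω => (Z 0 ω).1) 2 μ :=
    (memLp_two_iff_integrable_sq_norm hZ0.fst).2 hX2
  have hY : MemLp (fun ω => (Z 0 ω).2) 2 μ :=
    (memLp_two_iff_integrable_sq_norm hZ0.snd).2 hY2
  have hX1 := hX.integrable one_le_two
  have hY1 := hY.integrable one_le_two
  have hXY := hX.integrable_inner hY
  rw [integral_inner_sub_integral hX1 hY1 hXY]
  filter_upwards [strong_law_ae_comp hindep hident measurable_fst hX1,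
    strong_law_ae_comp hindep hident measurable_snd hY1,
    strong_law_ae_comp hindep hident continuous_inner.measurable hXY] with ω hXω hYω hXYω
  simp only [smul_eq_mul] at hXYω
  refine (hXYω.sub (hXω.inner hYω)).congr fun n => ?_
  simpa only [card_range] using (inv_card_mul_sum_inner_sub_average (range n) _ _).symm

/-- Strong consistency of the empirical Wasserstein covariance: for i.i.d. pairs
`(Xᵢ, Yᵢ)` of Bochner square-integrable random elements of `L²[0,1]`, the empirical
covariance `Ĉₙ = n⁻¹ Σᵢ ⟨Xᵢ - X̄, Yᵢ - Ȳ⟩` converges almost surely to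
`C = E⟨X₁ - E X₁, Y₁ - E Y₁⟩`. -/
theorem empirical_wasserstein_covariance_consistent
    [MeasurableSpace L2unit] [BorelSpace L2unit]
    {Ω : Type*} [MeasurableSpace Ω] (μ : Measure Ω) [IsProbabilityMeasure μ]
    (Z : ℕ → Ω → L2unit × L2unit)
    (hmeas : ∀ i, Measurable (Z i))
    (hindep : ProbabilityTheory.iIndepFun Z μ)
    (hident : ∀ i, ProbabilityTheory.IdentDistrib (Z i) (Z 0) μ μ)
    (hX2 : Integrable (fun ω => ‖(Z 0 ω).1‖ ^ 2) μ)
    (hY2 : Integrable (fun ω => ‖(Z 0 ω).2‖ ^ 2) μ) :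
    ∀ᵐ ω ∂μ, Tendsto
      (fun n : ℕ =>
        (n : ℝ)⁻¹ * ∑ i ∈ Finset.range n,
          (inner ℝ ((Z i ω).1 - (n : ℝ)⁻¹ • ∑ j ∈ Finset.range n, (Z j ω).1)
                 ((Z i ω).2 - (n : ℝ)⁻¹ • ∑ j ∈ Finset.range n, (Z j ω).2) : ℝ))
      atTop
      (nhds (∫ ω', (inner ℝ ((Z 0 ω').1 - ∫ ω'', (Z 0 ω'').1 ∂μ)
                          ((Z 0 ω').2 - ∫ ω'', (Z 0 ω'').2 ∂μ) : ℝ) ∂μ)) :=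
  empirical_wasserstein_covariance_consistent_general μ Z hindep hident hX2 hY2
end
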